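/- Cost semantics simulates backwards along expression steps: if e →_Σ e' and e' ⇓ v; u⃗, then e ⇓ v; u·u⃗ for some fresh vertex u, i.e., the source expression evaluates to the same value with exactly one additional leading operation. -/

import Mathlib

/-! # The λ⁴ calculus: syntax and substitution -/

/-- Priorities: constants (drawn from ℕ) or priority variables. -/
inductive PrioE where
  | pconst : ℕ → PrioE
  | pvar : String → PrioE
deriving DecidableEq

/-- Constraints: conjunctions of atomic inequalities. -/
inductive ConstrE where
  | le : PrioE → PrioE → ConstrE
  | conj : ConstrE → ConstrE → ConstrE
deriving DecidableEq

/-- Types of λ⁴. -/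
inductive Ty where
  | unit : Ty
  | nat : Ty
  | arrow : Ty → Ty → Ty
  | prod : Ty → Ty → Ty
  | sum : Ty → Ty → Ty
  | thread : Ty → PrioE → Ty    -- τ thread[ρ]
  | cmd : Ty → PrioE → Ty       -- τ cmd[ρ]
  | all : String → ConstrE → Ty → Ty  -- ∀ π : C . τ
deriving DecidableEq

mutual
/-- Expressions (and values) of λ⁴. -/
inductive Exp where
  | var : String → Exp
  | triv : Exp                            -- ⟨⟩
  | num : ℕ → Exp                         -- numeral
  | lam : String → Exp → Exp              -- λ x . e
  | pairv : Exp → Exp → Exp               -- value pair ⟨v₁, v₂⟩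
  | inlv : Exp → Exp                      -- value injection l · v
  | inrv : Exp → Exp                      -- value injection r · v
  | tid : String → Exp                    -- thread identifier
  | cmd : PrioE → Cmd → Exp               -- cmd[ρ] {m}
  | plam : String → ConstrE → Exp → Exp   -- Λ π : C . e
  | lett : String → Exp → Exp → Exp       -- let x = e₁ in e₂
  | ifz : Exp → Exp → String → Exp → Exp  -- ifz v {e₁; x.e₂}
  | app : Exp → Exp → Exp
  | pair : Exp → Exp → Exp                -- pair allocation ⟨v₁, v₂⟩ₑ
  | fst : Exp → Exp
  | snd : Exp → Exp
  | inl : Exp → Exp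
  | inr : Exp → Exp
  | case : Exp → String → Exp → String → Exp → Exp
  | output : Exp → Exp
  | input : Exp
  | papp : Exp → PrioE → Exp              -- priority instantiation v[ρ]
  | fix : String → Ty → Exp → Exp
/-- Commands of λ⁴. -/
inductive Cmd where
  | bnd : Exp → String → Cmd → Cmd        -- x ← e ; m
  | spawn : PrioE → Ty → Cmd → Cmd        -- spawn[ρ; τ] {m}
  | sync : Exp → Cmd
  | ret : Exp → Cmd
end

mutual
/-- Substitution `[v/x]e` of an expression for a variable in an expression. -/
def substE (v : Exp) (x : String) : Exp → Exp
  | .var y => if x = y then v else .var y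
  | .triv => .triv
  | .num n => .num n
  | .lam y e => .lam y (if x = y then e else substE v x e)
  | .pairv e₁ e₂ => .pairv (substE v x e₁) (substE v x e₂)
  | .inlv e => .inlv (substE v x e)
  | .inrv e => .inrv (substE v x e)
  | .tid a => .tid a
  | .cmd ρ m => .cmd ρ (substC v x m)
  | .plam π C e => .plam π C (substE v x e)
  | .lett y e₁ e₂ => .lett y (substE v x e₁) (if x = y then e₂ else substE v x e₂)
  | .ifz e e₁ y e₂ =>
      .ifz (substE v x e) (substE v x e₁) y (if x = y then e₂ else substE v x e₂)
  | .app e₁ e₂ => .app (substE v x e₁) (substE v x e₂)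
  | .pair e₁ e₂ => .pair (substE v x e₁) (substE v x e₂)
  | .fst e => .fst (substE v x e)
  | .snd e => .snd (substE v x e)
  | .inl e => .inl (substE v x e)
  | .inr e => .inr (substE v x e)
  | .case e y e₁ z e₂ =>
      .case (substE v x e) y (if x = y then e₁ else substE v x e₁)
        z (if x = z then e₂ else substE v x e₂)
  | .output e => .output (substE v x e)
  | .input => .input
  | .papp e ρ => .papp (substE v x e) ρ
  | .fix y τ e => .fix y τ (if x = y then e else substE v x e)
/-- Substitution `[v/x]m` of an expression for a variable in a command. -/
def substC (v : Exp) (x : String) : Cmd → Cmd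
  | .bnd e y m => .bnd (substE v x e) y (if x = y then m else substC v x m)
  | .spawn ρ τ m => .spawn ρ τ (substC v x m)
  | .sync e => .sync (substE v x e)
  | .ret e => .ret (substE v x e)
end

/-- Substitution `[ρ/π]` in a priority. -/
def substP (ρ : PrioE) (π : String) : PrioE → PrioE
  | .pconst c => .pconst c
  | .pvar y => if π = y then ρ else .pvar y

/-- Substitution `[ρ/π]` in a constraint. -/
def substPC (ρ : PrioE) (π : String) : ConstrE → ConstrE
  | .le ρ₁ ρ₂ => .le (substP ρ π ρ₁) (substP ρ π ρ₂)
  | .conj C₁ C₂ => .conj (substPC ρ π C₁) (substPC ρ π C₂)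

/-- Substitution `[ρ/π]` in a type. -/
def substPT (ρ : PrioE) (π : String) : Ty → Ty
  | .unit => .unit
  | .nat => .nat
  | .arrow τ₁ τ₂ => .arrow (substPT ρ π τ₁) (substPT ρ π τ₂)
  | .prod τ₁ τ₂ => .prod (substPT ρ π τ₁) (substPT ρ π τ₂)
  | .sum τ₁ τ₂ => .sum (substPT ρ π τ₁) (substPT ρ π τ₂)
  | .thread τ ρ' => .thread (substPT ρ π τ) (substP ρ π ρ')
  | .cmd τ ρ' => .cmd (substPT ρ π τ) (substP ρ π ρ')
  | .all π' C τ =>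
      if π = π' then .all π' C τ
      else .all π' (substPC ρ π C) (substPT ρ π τ)

mutual
/-- Substitution `[ρ/π]` in an expression. -/
def substPE (ρ : PrioE) (π : String) : Exp → Exp
  | .var y => .var y
  | .triv => .triv
  | .num n => .num n
  | .lam y e => .lam y (substPE ρ π e)
  | .pairv e₁ e₂ => .pairv (substPE ρ π e₁) (substPE ρ π e₂)
  | .inlv e => .inlv (substPE ρ π e)
  | .inrv e => .inrv (substPE ρ π e)
  | .tid a => .tid a
  | .cmd ρ' m => .cmd (substP ρ π ρ') (substPCmd ρ π m)
  | .plam π' C e =>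
      if π = π' then .plam π' C e
      else .plam π' (substPC ρ π C) (substPE ρ π e)
  | .lett y e₁ e₂ => .lett y (substPE ρ π e₁) (substPE ρ π e₂)
  | .ifz e e₁ y e₂ => .ifz (substPE ρ π e) (substPE ρ π e₁) y (substPE ρ π e₂)
  | .app e₁ e₂ => .app (substPE ρ π e₁) (substPE ρ π e₂)
  | .pair e₁ e₂ => .pair (substPE ρ π e₁) (substPE ρ π e₂)
  | .fst e => .fst (substPE ρ π e)
  | .snd e => .snd (substPE ρ π e)
  | .inl e => .inl (substPE ρ π e)
  | .inr e => .inr (substPE ρ π e)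
  | .case e y e₁ z e₂ =>
      .case (substPE ρ π e) y (substPE ρ π e₁) z (substPE ρ π e₂)
  | .output e => .output (substPE ρ π e)
  | .input => .input
  | .papp e ρ' => .papp (substPE ρ π e) (substP ρ π ρ')
  | .fix y τ e => .fix y (substPT ρ π τ) (substPE ρ π e)
/-- Substitution `[ρ/π]` in a command. -/
def substPCmd (ρ : PrioE) (π : String) : Cmd → Cmd
  | .bnd e y m => .bnd (substPE ρ π e) y (substPCmd ρ π m)
  | .spawn ρ' τ m => .spawn (substP ρ π ρ') (substPT ρ π τ) (substPCmd ρ π m)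
  | .sync e => .sync (substPE ρ π e)
  | .ret e => .ret (substPE ρ π e)
end

/-! # Static semantics of λ⁴ -/

/-- Signatures: lists of entries `a ~ τ @ ρ` recording the name, return type,
and priority of running threads. -/
abbrev Sig := List (String × Ty × PrioE)

/-- Typing contexts: variable typings, priority-variable declarations, and
assumed atomic constraints. -/
structure Ctx where
  vars : String → Option Ty
  pvars : Set String
  constrs : Set (PrioE × PrioE)

/-- The empty context. -/
def Ctx.empty : Ctx := ⟨fun _ => none, ∅, ∅⟩

/-- Extend a context with a variable typing `x : τ`. -/
def Ctx.extend (Γ : Ctx) (x : String) (τ : Ty) : Ctx :=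
  ⟨fun y => if y = x then some τ else Γ.vars y, Γ.pvars, Γ.constrs⟩

/-- The set of atomic constraints of a constraint. -/
def ConstrE.atoms : ConstrE → Set (PrioE × PrioE)
  | .le ρ₁ ρ₂ => {(ρ₁, ρ₂)}
  | .conj C₁ C₂ => C₁.atoms ∪ C₂.atoms

/-- Extend a context with a priority variable `π` and the constraints of `C`. -/
def Ctx.addP (Γ : Ctx) (π : String) (C : ConstrE) : Ctx :=
  ⟨Γ.vars, insert π Γ.pvars, Γ.constrs ∪ C.atoms⟩

/-- Constraint entailment `Γ ⊨_R C` (Figure: hyp, assume, refl, trans, conj).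
`R` is the fixed partial order on priority constants. -/
inductive CEnt (R : Set (ℕ × ℕ)) (Γ : Set (PrioE × PrioE)) : ConstrE → Prop where
  | hyp {ρ₁ ρ₂} : (ρ₁, ρ₂) ∈ Γ → CEnt R Γ (.le ρ₁ ρ₂)
  | assume {c₁ c₂} : (c₁, c₂) ∈ R → CEnt R Γ (.le (.pconst c₁) (.pconst c₂))
  | refl {ρ} : CEnt R Γ (.le ρ ρ)
  | trans {ρ₁ ρ₂ ρ₃} : CEnt R Γ (.le ρ₁ ρ₂) → CEnt R Γ (.le ρ₂ ρ₃) →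
      CEnt R Γ (.le ρ₁ ρ₃)
  | conj {C₁ C₂} : CEnt R Γ C₁ → CEnt R Γ C₂ → CEnt R Γ (.conj C₁ C₂)

mutual
/-- Expression typing `Sg; Γ ⊢_R e : τ`. -/
inductive HasTy (R : Set (ℕ × ℕ)) : Sig → Ctx → Exp → Ty → Prop where
  | var {Sg : Sig} {Γ : Ctx} {x τ} :
      Γ.vars x = some τ → HasTy R Sg Γ (.var x) τ
  | triv {Sg Γ} : HasTy R Sg Γ .triv .unit
  | num {Sg Γ n} : HasTy R Sg Γ (.num n) .nat
  | tid {Sg : Sig} {Γ a τ ρ} :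
      (a, τ, ρ) ∈ Sg → HasTy R Sg Γ (.tid a) (.thread τ ρ)
  | lam {Sg Γ x τ₁ τ₂ e} :
      HasTy R Sg (Ctx.extend Γ x τ₁) e τ₂ →
      HasTy R Sg Γ (.lam x e) (.arrow τ₁ τ₂)
  | app {Sg Γ v₁ v₂ τ₁ τ₂} :
      HasTy R Sg Γ v₁ (.arrow τ₁ τ₂) → HasTy R Sg Γ v₂ τ₁ →
      HasTy R Sg Γ (.app v₁ v₂) τ₂
  | ifz {Sg Γ v e₁ x e₂ τ} :
      HasTy R Sg Γ v .nat → HasTy R Sg Γ e₁ τ →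
      HasTy R Sg (Ctx.extend Γ x .nat) e₂ τ →
      HasTy R Sg Γ (.ifz v e₁ x e₂) τ
  | pair {Sg Γ v₁ v₂ τ₁ τ₂} :
      HasTy R Sg Γ v₁ τ₁ → HasTy R Sg Γ v₂ τ₂ →
      HasTy R Sg Γ (.pair v₁ v₂) (.prod τ₁ τ₂)
  | pairv {Sg Γ v₁ v₂ τ₁ τ₂} :
      HasTy R Sg Γ v₁ τ₁ → HasTy R Sg Γ v₂ τ₂ →
      HasTy R Sg Γ (.pairv v₁ v₂) (.prod τ₁ τ₂)
  | fst {Sg Γ v τ₁ τ₂} :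
      HasTy R Sg Γ v (.prod τ₁ τ₂) → HasTy R Sg Γ (.fst v) τ₁
  | snd {Sg Γ v τ₁ τ₂} :
      HasTy R Sg Γ v (.prod τ₁ τ₂) → HasTy R Sg Γ (.snd v) τ₂
  | inl {Sg Γ v τ₁ τ₂} :
      HasTy R Sg Γ v τ₁ → HasTy R Sg Γ (.inl v) (.sum τ₁ τ₂)
  | inr {Sg Γ v τ₁ τ₂} :
      HasTy R Sg Γ v τ₂ → HasTy R Sg Γ (.inr v) (.sum τ₁ τ₂)
  | inlv {Sg Γ v τ₁ τ₂} :
      HasTy R Sg Γ v τ₁ → HasTy R Sg Γ (.inlv v) (.sum τ₁ τ₂)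
  | inrv {Sg Γ v τ₁ τ₂} :
      HasTy R Sg Γ v τ₂ → HasTy R Sg Γ (.inrv v) (.sum τ₁ τ₂)
  | case {Sg Γ v x e₁ y e₂ τ₁ τ₂ τ'} :
      HasTy R Sg Γ v (.sum τ₁ τ₂) →
      HasTy R Sg (Ctx.extend Γ x τ₁) e₁ τ' →
      HasTy R Sg (Ctx.extend Γ y τ₂) e₂ τ' →
      HasTy R Sg Γ (.case v x e₁ y e₂) τ'
  | output {Sg Γ v} : HasTy R Sg Γ v .nat → HasTy R Sg Γ (.output v) .unit
  | input {Sg Γ} : HasTy R Sg Γ .input .nat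
  | cmdI {Sg Γ m τ ρ} :
      CmdTy R Sg Γ m τ ρ → HasTy R Sg Γ (.cmd ρ m) (.cmd τ ρ)
  | plam {Sg Γ π C e τ} :
      HasTy R Sg (Ctx.addP Γ π C) e τ →
      HasTy R Sg Γ (.plam π C e) (.all π C τ)
  | papp {Sg : Sig} {Γ : Ctx} {v π C τ ρ'} :
      HasTy R Sg Γ v (.all π C τ) →
      CEnt R Γ.constrs (substPC ρ' π C) →
      HasTy R Sg Γ (.papp v ρ') (substPT ρ' π τ)
  | fix {Sg Γ x τ e} :
      HasTy R Sg (Ctx.extend Γ x τ) e τ → HasTy R Sg Γ (.fix x τ e) τ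
  | lett {Sg Γ x e₁ e₂ τ₁ τ₂} :
      HasTy R Sg Γ e₁ τ₁ → HasTy R Sg (Ctx.extend Γ x τ₁) e₂ τ₂ →
      HasTy R Sg Γ (.lett x e₁ e₂) τ₂
/-- Command typing `Sg; Γ ⊢_R m ÷ τ @ ρ`: command `m` is runnable at
priority `ρ` and returns a value of type `τ`. -/
inductive CmdTy (R : Set (ℕ × ℕ)) : Sig → Ctx → Cmd → Ty → PrioE → Prop where
  | bnd {Sg Γ e x m τ τ' ρ} :
      HasTy R Sg Γ e (.cmd τ ρ) →
      CmdTy R Sg (Ctx.extend Γ x τ) m τ' ρ →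
      CmdTy R Sg Γ (.bnd e x m) τ' ρ
  | spawn {Sg Γ m τ ρ ρ'} :
      CmdTy R Sg Γ m τ ρ' →
      CmdTy R Sg Γ (.spawn ρ' τ m) (.thread τ ρ') ρ
  | sync {Sg : Sig} {Γ : Ctx} {e τ ρ ρ'} :
      HasTy R Sg Γ e (.thread τ ρ') →
      CEnt R Γ.constrs (.le ρ ρ') →
      CmdTy R Sg Γ (.sync e) τ ρ
  | ret {Sg Γ e τ ρ} :
      HasTy R Sg Γ e τ → CmdTy R Sg Γ (.ret e) τ ρ
end

/-- The value judgment `v val_Sg`. -/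
inductive IsValue (Sg : Sig) : Exp → Prop where
  | triv : IsValue Sg .triv
  | num {n} : IsValue Sg (.num n)
  | lam {x e} : IsValue Sg (.lam x e)
  | pairv {v₁ v₂} : IsValue Sg v₁ → IsValue Sg v₂ → IsValue Sg (.pairv v₁ v₂)
  | inlv {v} : IsValue Sg v → IsValue Sg (.inlv v)
  | inrv {v} : IsValue Sg v → IsValue Sg (.inrv v)
  | tid {a τ ρ} : (a, τ, ρ) ∈ Sg → IsValue Sg (.tid a)
  | cmd {ρ m} : IsValue Sg (.cmd ρ m)
  | plam {π C e} : IsValue Sg (.plam π C e)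

/-! # Dynamic semantics of λ⁴ expressions -/

/-- The expression transition relation `e →_Sg e'` (left-to-right call-by-value). -/
inductive EStep (Sg : Sig) : Exp → Exp → Prop where
  | lettStep {x e₁ e₁' e₂} :
      EStep Sg e₁ e₁' → EStep Sg (.lett x e₁ e₂) (.lett x e₁' e₂)
  | lettV {x v e} : IsValue Sg v → EStep Sg (.lett x v e) (substE v x e)
  | ifzZ {e₁ x e₂} : EStep Sg (.ifz (.num 0) e₁ x e₂) e₁
  | ifzS {n e₁ x e₂} :
      EStep Sg (.ifz (.num (n + 1)) e₁ x e₂) (substE (.num n) x e₂)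
  | app {x e v} : IsValue Sg v → EStep Sg (.app (.lam x e) v) (substE v x e)
  | pair {v₁ v₂} : IsValue Sg v₁ → IsValue Sg v₂ →
      EStep Sg (.pair v₁ v₂) (.pairv v₁ v₂)
  | fst {v₁ v₂} : IsValue Sg v₁ → IsValue Sg v₂ →
      EStep Sg (.fst (.pairv v₁ v₂)) v₁
  | snd {v₁ v₂} : IsValue Sg v₁ → IsValue Sg v₂ →
      EStep Sg (.snd (.pairv v₁ v₂)) v₂
  | inl {v} : IsValue Sg v → EStep Sg (.inl v) (.inlv v)
  | inr {v} : IsValue Sg v → EStep Sg (.inr v) (.inrv v)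
  | caseL {v x e₁ y e₂} : IsValue Sg v →
      EStep Sg (.case (.inlv v) x e₁ y e₂) (substE v x e₁)
  | caseR {v x e₁ y e₂} : IsValue Sg v →
      EStep Sg (.case (.inrv v) x e₁ y e₂) (substE v y e₂)
  | output {n} : EStep Sg (.output (.num n)) .triv
  | input {n : ℕ} : EStep Sg .input (.num n)
  | papp {π C e ρ'} :
      EStep Sg (.papp (.plam π C e) ρ') (substPE ρ' π e)
  | fix {x τ e} : EStep Sg (.fix x τ e) (substE (.fix x τ e) x e)

/-! # Cost semantics for λ⁴ expressions -/

/-- Syntactic values (the forms to which the cost semantics rule C-Val applies). -/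
inductive SynVal : Exp → Prop where
  | triv : SynVal .triv
  | num {n} : SynVal (.num n)
  | lam {x e} : SynVal (.lam x e)
  | pairv {v₁ v₂} : SynVal v₁ → SynVal v₂ → SynVal (.pairv v₁ v₂)
  | inlv {v} : SynVal v → SynVal (.inlv v)
  | inrv {v} : SynVal v → SynVal (.inrv v)
  | tid {a} : SynVal (.tid a)
  | cmd {ρ m} : SynVal (.cmd ρ m)
  | plam {π C e} : SynVal (.plam π C e)

/-- The expression cost judgment `e ⇓ v; u⃗` : expression `e` evaluates to the
value `v`, producing the sequence `u⃗` of fresh unit-cost operations (vertices,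
modeled as natural numbers). -/
inductive EvalE : Exp → Exp → List ℕ → Prop where
  | val {v} : SynVal v → EvalE v v []
  | lett {x e₁ e₂ v₁ v l₁ l₂ u} :
      EvalE e₁ v₁ l₁ → EvalE (substE v₁ x e₂) v l₂ →
      EvalE (.lett x e₁ e₂) v (l₁ ++ u :: l₂)
  | ifzZ {e₁ x e₂ v l u} : EvalE e₁ v l →
      EvalE (.ifz (.num 0) e₁ x e₂) v (u :: l)
  | ifzS {n e₁ x e₂ v l u} : EvalE (substE (.num n) x e₂) v l →
      EvalE (.ifz (.num (n + 1)) e₁ x e₂) v (u :: l)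
  | app {x e v v' l u} : SynVal v → EvalE (substE v x e) v' l →
      EvalE (.app (.lam x e) v) v' (u :: l)
  | pair {v₁ v₂ u} : SynVal v₁ → SynVal v₂ →
      EvalE (.pair v₁ v₂) (.pairv v₁ v₂) [u]
  | fst {v₁ v₂ u} : SynVal v₁ → SynVal v₂ →
      EvalE (.fst (.pairv v₁ v₂)) v₁ [u]
  | snd {v₁ v₂ u} : SynVal v₁ → SynVal v₂ →
      EvalE (.snd (.pairv v₁ v₂)) v₂ [u]
  | inl {v u} : SynVal v → EvalE (.inl v) (.inlv v) [u]
  | inr {v u} : SynVal v → EvalE (.inr v) (.inrv v) [u]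
  | caseL {v x e₁ y e₂ v' l u} : SynVal v → EvalE (substE v x e₁) v' l →
      EvalE (.case (.inlv v) x e₁ y e₂) v' (u :: l)
  | caseR {v x e₁ y e₂ v' l u} : SynVal v → EvalE (substE v y e₂) v' l →
      EvalE (.case (.inrv v) x e₁ y e₂) v' (u :: l)
  | output {n u} : EvalE (.output (.num n)) .triv [u]
  | input {n : ℕ} {u} : EvalE .input (.num n) [u]
  | papp {π C e ρ v l u} : EvalE (substPE ρ π e) v l →
      EvalE (.papp (.plam π C e) ρ) v (u :: l)
  | fix {x τ e v l u} : EvalE (substE (.fix x τ e) x e) v l →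
      EvalE (.fix x τ e) v (u :: l)

lemma IsValue.synVal {Sg : Sig} {v : Exp} (h : IsValue Sg v) : SynVal v := by
  induction h with
  | triv => exact .triv
  | num => exact .num
  | lam => exact .lam
  | pairv _ _ ih₁ ih₂ => exact .pairv ih₁ ih₂
  | inlv _ ih => exact .inlv ih
  | inrv _ ih => exact .inrv ih
  | tid _ => exact .tid
  | cmd => exact .cmd
  | plam => exact .plam

lemma SynVal.eq_of_evalE {w v : Exp} {l : List ℕ} (hw : SynVal w) (h : EvalE w v l) :
    v = w ∧ l = [] := by
  cases h <;> first
    | exact ⟨rfl, rfl⟩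
    | cases hw

theorem EStep.evalE_cons {Sg : Sig} {e e' v : Exp} {l : List ℕ} (hstep : EStep Sg e e')
    (heval : EvalE e' v l) (u : ℕ) : EvalE e v (u :: l) := by
  induction hstep generalizing v l with
  | lettStep _ ih =>
    cases heval with
    | val hv => cases hv
    -- the new vertex leads the trace of `e₁`, hence that of the whole `let`
    | lett h₁ h₂ => exact .lett (ih h₁) h₂
  | lettV hv => exact .lett (.val hv.synVal) heval
  | ifzZ => exact .ifzZ heval
  | ifzS => exact .ifzS heval
  | app hv => exact .app hv.synVal heval
  | pair h₁ h₂ =>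
    cases heval
    exact .pair h₁.synVal h₂.synVal
  | fst h₁ h₂ =>
    obtain ⟨rfl, rfl⟩ := h₁.synVal.eq_of_evalE heval
    exact .fst h₁.synVal h₂.synVal
  | snd h₁ h₂ =>
    obtain ⟨rfl, rfl⟩ := h₂.synVal.eq_of_evalE heval
    exact .snd h₁.synVal h₂.synVal
  | inl h =>
    cases heval
    exact .inl h.synVal
  | inr h =>
    cases heval
    exact .inr h.synVal
  | caseL h => exact .caseL h.synVal heval
  | caseR h => exact .caseR h.synVal heval
  | output =>
    cases heval
    exact .output
  | input =>
    cases heval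
    exact .input
  | papp => exact .papp heval
  | fix => exact .fix heval

/-- The cost semantics simulates backwards along expression
steps: if `e →_Σ e'` and `e' ⇓ v; u⃗`, then `e ⇓ v; u·u⃗` for some fresh
vertex `u`. -/
theorem evalE_backward_step (Sg : Sig) (e e' v : Exp) (l : List ℕ)
    (hstep : EStep Sg e e') (heval : EvalE e' v l) :
    ∃ u, EvalE e v (u :: l) :=
  ⟨0, hstep.evalE_cons heval 0⟩
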